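/- arXiv:1007.0532 — 9 statements merged into one kernel-verified Lean document; each statement's English description precedes it below -/
import Mathlib

section
/- A ring R has a null two-sided ideal of finite index if and only if R has a null subring of finite index. -/
/-- The additive subgroup underlying a two-sided ideal of a (possibly non-unital) ring. -/
def TwoSidedIdeal.addSubgroup {R : Type*} [NonUnitalNonAssocRing R] (I : TwoSidedIdeal R) :
    AddSubgroup R where
  carrier := I
  add_mem' := fun ha hb => I.add_mem ha hb
  zero_mem' := I.zero_mem
  neg_mem' := fun ha => I.neg_mem ha

/-!
Every ideal is a subring. Conversely, let `S` be a null subring of finite index and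
let `J` be the largest two-sided ideal contained in `S`, i.e. the set of `a ∈ S` with
`a R, R a, R a R ⊆ S`. Since `S` is null, `a * r` and `r * a` only depend on the class of `r`
modulo `S` when `a ∈ S`, so membership in `J` is decided by testing against finitely many
coset representatives. Hence `J` contains a finite intersection of preimages of `S` under
additive maps, and each of these has finite index.
-/

namespace AddSubgroup

instance finiteIndex_iInf_comap {G G' ι : Type*} [AddGroup G] [AddGroup G'] [Finite ι]
    (H : AddSubgroup G') [H.FiniteIndex] (f : ι → G →+ G') : (⨅ i, H.comap (f i)).FiniteIndex :=
  finiteIndex_iInf fun i => by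
    have := H.relIndex_comap_ne_zero (f i) (K := ⊤) (by simpa using FiniteIndex.index_ne_zero)
    exact ⟨by simpa using this⟩

variable {R : Type*} [NonUnitalRing R]

def idealCore (S : AddSubgroup R) : TwoSidedIdeal R :=
  .mk' {a | a ∈ S ∧ (∀ r, a * r ∈ S) ∧ (∀ r, r * a ∈ S) ∧ ∀ r r', r * a * r' ∈ S}
    ⟨S.zero_mem, by simp [S.zero_mem], by simp [S.zero_mem], by simp [S.zero_mem]⟩
    (fun ⟨ha, haR, hRa, hRaR⟩ ⟨hb, hbR, hRb, hRbR⟩ =>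
      ⟨S.add_mem ha hb, fun r => by simpa [add_mul] using S.add_mem (haR r) (hbR r),
        fun r => by simpa [mul_add] using S.add_mem (hRa r) (hRb r),
        fun r r' => by simpa [mul_add, add_mul] using S.add_mem (hRaR r r') (hRbR r r')⟩)
    (fun ⟨ha, haR, hRa, hRaR⟩ =>
      ⟨S.neg_mem ha, fun r => by simpa using S.neg_mem (haR r),
        fun r => by simpa using S.neg_mem (hRa r),
        fun r r' => by simpa using S.neg_mem (hRaR r r')⟩)
    (fun {x _} ⟨_, _, hRa, hRaR⟩ =>
      ⟨hRa x, fun r => hRaR x r, fun r => by simpa [mul_assoc] using hRa (r * x),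
        fun r r' => by simpa [mul_assoc] using hRaR (r * x) r'⟩)
    (fun {_ y} ⟨_, haR, _, hRaR⟩ =>
      ⟨haR y, fun r => by simpa [mul_assoc] using haR (y * r),
        fun r => by simpa [mul_assoc] using hRaR r y,
        fun r r' => by simpa [mul_assoc] using hRaR r (y * r')⟩)

theorem mem_idealCore {S : AddSubgroup R} {a : R} :
    a ∈ S.idealCore ↔ a ∈ S ∧ (∀ r, a * r ∈ S) ∧ (∀ r, r * a ∈ S) ∧ ∀ r r', r * a * r' ∈ S :=
  TwoSidedIdeal.mem_mk' ..

theorem mem_of_mem_idealCore {S : AddSubgroup R} {a : R} (ha : a ∈ S.idealCore) : a ∈ S :=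
  (mem_idealCore.mp ha).1

section Null

variable {S : AddSubgroup R} (hS : ∀ x ∈ S, ∀ y ∈ S, x * y = 0)
include hS

theorem mul_out_mk_of_null {a : R} (ha : a ∈ S) (r : R) :
    a * (QuotientAddGroup.mk r : R ⧸ S).out = a * r := by
  obtain ⟨s, hs⟩ := QuotientAddGroup.mk_out_eq_add S r
  rw [hs, mul_add, hS a ha s s.2, add_zero]

theorem out_mk_mul_of_null {a : R} (ha : a ∈ S) (r : R) :
    (QuotientAddGroup.mk r : R ⧸ S).out * a = r * a := by
  obtain ⟨s, hs⟩ := QuotientAddGroup.mk_out_eq_add S r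
  rw [hs, add_mul, hS s s.2 a ha, add_zero]

theorem finiteIndex_idealCore_of_null [S.FiniteIndex] : S.idealCore.addSubgroup.FiniteIndex := by
  have : Finite (R ⧸ S) := S.finite_quotient_of_finiteIndex
  let K : AddSubgroup R := S ⊓ (⨅ q : R ⧸ S, S.comap (.mulRight q.out)) ⊓
    (⨅ q : R ⧸ S, S.comap (.mulLeft q.out)) ⊓
    ⨅ p : (R ⧸ S) × (R ⧸ S), S.comap ((AddMonoidHom.mulRight p.2.out).comp (.mulLeft p.1.out))
  have : K.FiniteIndex := by unfold K; infer_instance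
  refine finiteIndex_of_le (H := K) fun a ha => ?_
  simp only [K, mem_inf, mem_iInf, mem_comap, AddMonoidHom.coe_comp, Function.comp_apply,
    AddMonoidHom.coe_mulRight, AddMonoidHom.coe_mulLeft] at ha
  obtain ⟨⟨⟨haS, haR⟩, hRa⟩, hRaR⟩ := ha
  refine mem_idealCore.mpr ⟨haS, fun r => ?_, fun r => ?_, fun r r' => ?_⟩
  · simpa [mul_out_mk_of_null hS haS] using haR (QuotientAddGroup.mk r)
  · simpa [out_mk_mul_of_null hS haS] using hRa (QuotientAddGroup.mk r)
  · rw [← out_mk_mul_of_null hS haS r, ← mul_out_mk_of_null hS (hRa _) r']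
    exact hRaR (_, _)

end Null

end AddSubgroup

/-- A ring has a null two-sided ideal of finite index iff it has a null
(non-unital) subring of finite index. -/
theorem null_ideal_finiteIndex_iff_null_subring_finiteIndex
    (R : Type*) [NonUnitalRing R] :
    (∃ I : TwoSidedIdeal R, I.addSubgroup.FiniteIndex ∧ ∀ x ∈ I, ∀ y ∈ I, x * y = 0) ↔
      (∃ S : NonUnitalSubring R, S.toAddSubgroup.FiniteIndex ∧ ∀ x ∈ S, ∀ y ∈ S, x * y = 0) := by
  constructor
  · rintro ⟨I, hI, hnull⟩
    exact ⟨.ofClass I, hI, hnull⟩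
  · rintro ⟨S, hS, hnull⟩
    exact ⟨S.toAddSubgroup.idealCore, AddSubgroup.finiteIndex_idealCore_of_null hnull,
      fun x hx y hy => hnull x (AddSubgroup.mem_of_mem_idealCore hx) y
        (AddSubgroup.mem_of_mem_idealCore hy)⟩
end

section
/- A ring R has a nilpotent two-sided ideal of finite index if and only if R has a nilpotent subring of finite index. -/
/-- `listProd x [y₁, …, yₖ] = x * y₁ * ⋯ * yₖ`, a product of `k + 1` ring elements
(meaningful in a possibly non-unital ring). -/
def listProd {R : Type*} [Mul R] : R → List R → R
  | x, [] => x
  | x, y :: l => listProd (x * y) l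

/-! A two-sided ideal is a subring. Conversely, a subring `S` of finite index contains the
two-sided ideal `{x | x, xR, Rx, RxR ⊆ S}`, which inherits its nilpotency. This ideal has finite
index because, once `x ∈ S`, a condition such as `x r ∈ S` depends only on `r` modulo `S`, so only
finitely many conditions are imposed. -/

namespace AddSubgroup

theorem finiteIndex_comap {M N : Type*} [AddGroup M] [AddGroup N] (f : M →+ N)
    (A : AddSubgroup N) [A.FiniteIndex] : (A.comap f).FiniteIndex :=
  ⟨(A.index_comap f).symm ▸ (A.isFiniteRelIndex_of_finiteIndex (K := f.range)).relIndex_ne_zero⟩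

theorem finiteIndex_inf_iInf_comap_flip {M N : Type*} [AddCommGroup M]
    [AddCommGroup N] (μ : M →+ N →+ M) {A : AddSubgroup M} {B : AddSubgroup N}
    [A.FiniteIndex] [B.FiniteIndex] (hμ : ∀ a ∈ A, ∀ b ∈ B, μ a b ∈ A) :
    (A ⊓ ⨅ n, A.comap (μ.flip n)).FiniteIndex := by
  have reduce_to_reps : A ⊓ ⨅ n, A.comap (μ.flip n) = A ⊓ ⨅ q : N ⧸ B, A.comap (μ.flip q.out) := by
    refine le_antisymm (inf_le_inf_left _ (iInf_mono' fun q => ⟨q.out, le_rfl⟩)) ?_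
    rintro x ⟨hxA, hx⟩
    refine ⟨hxA, mem_iInf.mpr fun n => ?_⟩
    have hn : n - (n : N ⧸ B).out ∈ B :=
      QuotientAddGroup.eq_iff_sub_mem.mp (QuotientAddGroup.out_eq' _).symm
    show μ x n ∈ A
    rw [← add_sub_cancel (n : N ⧸ B).out n, map_add]
    exact A.add_mem (mem_iInf.mp hx _) (hμ x hxA _ hn)
  rw [reduce_to_reps]
  have := finiteIndex_iInf fun q : N ⧸ B => A.finiteIndex_comap (μ.flip q.out)
  infer_instance

variable {R : Type*} [NonUnitalRing R]

def rightIdealCore (A : AddSubgroup R) : AddSubgroup R :=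
  A ⊓ ⨅ r, A.comap (AddMonoidHom.mulRight r)

def leftIdealCore (A : AddSubgroup R) : AddSubgroup R :=
  A ⊓ ⨅ r, A.comap (AddMonoidHom.mulLeft r)

theorem mem_rightIdealCore {A : AddSubgroup R} {x : R} :
    x ∈ A.rightIdealCore ↔ x ∈ A ∧ ∀ r, x * r ∈ A := by
  simp [rightIdealCore, mem_iInf]

theorem mem_leftIdealCore {A : AddSubgroup R} {x : R} :
    x ∈ A.leftIdealCore ↔ x ∈ A ∧ ∀ r, r * x ∈ A := by
  simp [leftIdealCore, mem_iInf]

theorem mul_mem_rightIdealCore {A : AddSubgroup R} {x : R} (hx : x ∈ A.rightIdealCore) (r : R) :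
    x * r ∈ A.rightIdealCore :=
  mem_rightIdealCore.mpr ⟨(mem_rightIdealCore.mp hx).2 r,
    fun s => mul_assoc x r s ▸ (mem_rightIdealCore.mp hx).2 (r * s)⟩

theorem finiteIndex_rightIdealCore {A : AddSubgroup R} [A.FiniteIndex]
    (hA : ∀ a ∈ A, ∀ b ∈ A, a * b ∈ A) : A.rightIdealCore.FiniteIndex := by
  unfold rightIdealCore
  exact finiteIndex_inf_iInf_comap_flip (AddMonoidHom.mul : R →+ R →+ R) (B := A)
    fun a ha b hb => by simpa using hA a ha b hb

theorem finiteIndex_leftIdealCore {A : AddSubgroup R} [A.FiniteIndex]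
    (hA : ∀ a ∈ A, ∀ b ∈ A, a * b ∈ A) : A.leftIdealCore.FiniteIndex := by
  unfold leftIdealCore
  exact finiteIndex_inf_iInf_comap_flip (AddMonoidHom.mul : R →+ R →+ R).flip (B := A)
    fun a ha b hb => by simpa using hA b hb a ha

def twoSidedIdealCore (A : AddSubgroup R) : TwoSidedIdeal R :=
  TwoSidedIdeal.mk' A.rightIdealCore.leftIdealCore (zero_mem _) add_mem neg_mem
    (fun {r x} hx => by
      rw [SetLike.mem_coe, mem_leftIdealCore] at hx ⊢
      exact ⟨hx.2 r, fun s => mul_assoc s r x ▸ hx.2 (s * r)⟩)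
    (fun {x r} hx => by
      rw [SetLike.mem_coe, mem_leftIdealCore] at hx ⊢
      exact ⟨mul_mem_rightIdealCore hx.1 r,
        fun s => (mul_assoc s x r).symm ▸ mul_mem_rightIdealCore (hx.2 s) r⟩)

theorem twoSidedIdealCore_addSubgroup (A : AddSubgroup R) :
    A.twoSidedIdealCore.addSubgroup = A.rightIdealCore.leftIdealCore := by
  ext x
  exact TwoSidedIdeal.mem_mk' _ _ _ _ _ _ x

theorem mem_of_mem_twoSidedIdealCore {A : AddSubgroup R} {x : R} (hx : x ∈ A.twoSidedIdealCore) :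
    x ∈ A :=
  (mem_rightIdealCore.mp (mem_leftIdealCore.mp ((TwoSidedIdeal.mem_mk' ..).mp hx)).1).1

theorem finiteIndex_twoSidedIdealCore {A : AddSubgroup R} [A.FiniteIndex]
    (hA : ∀ a ∈ A, ∀ b ∈ A, a * b ∈ A) : A.twoSidedIdealCore.addSubgroup.FiniteIndex := by
  have := finiteIndex_rightIdealCore hA
  rw [twoSidedIdealCore_addSubgroup]
  exact finiteIndex_leftIdealCore fun a ha b _ => mul_mem_rightIdealCore ha b

end AddSubgroup

/-- A ring has a nilpotent two-sided ideal of finite index iff it has a nilpotent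
(non-unital) subring of finite index.  Nilpotency of class at most `n` (for some `n ≥ 1`)
means that every product of `n` elements is zero. -/
theorem nilpotent_ideal_finiteIndex_iff_nilpotent_subring_finiteIndex
    (R : Type*) [NonUnitalRing R] :
    (∃ I : TwoSidedIdeal R, I.addSubgroup.FiniteIndex ∧
        ∃ n : ℕ, 1 ≤ n ∧ ∀ x ∈ I, ∀ l : List R, (∀ y ∈ l, y ∈ I) → l.length + 1 = n →
          listProd x l = 0) ↔
      (∃ S : NonUnitalSubring R, S.toAddSubgroup.FiniteIndex ∧
        ∃ n : ℕ, 1 ≤ n ∧ ∀ x ∈ S, ∀ l : List R, (∀ y ∈ l, y ∈ S) → l.length + 1 = n →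
          listProd x l = 0) := by
  constructor
  · rintro ⟨I, hI, n, hn, hnil⟩
    exact ⟨NonUnitalSubring.ofClass I, hI, n, hn, hnil⟩
  · rintro ⟨S, hS, n, hn, hnil⟩
    have hIS : ∀ {x}, x ∈ S.toAddSubgroup.twoSidedIdealCore → x ∈ S :=
      AddSubgroup.mem_of_mem_twoSidedIdealCore
    refine ⟨S.toAddSubgroup.twoSidedIdealCore,
      AddSubgroup.finiteIndex_twoSidedIdealCore fun a ha b hb => S.mul_mem ha hb, n, hn,
      fun x hx l hl => hnil x (hIS hx) l fun y hy => hIS (hl y hy)⟩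
end

section
/- Let R be a ring with identity (not necessarily commutative). If the group of units of the ring of 3×3 matrices over R has a solvable subgroup H₀ of finite index, then R has a nilpotent two-sided ideal of finite index; moreover, if H₀ has derived length n, there is a two-sided ideal I of R of finite index such that every product of 2^n elements of I equals 0. -/
/-!
Let `N` be the normal core of `H₀` and, for a subgroup `M` of `GLₙ(R)` (`n ≥ 3`), let `A(M)` be
the set of `a : R` whose elementary matrices `1 + a eᵢⱼ` all lie in `M`. Since `N` is normal of
finite index, `A(N)` is a two-sided ideal of finite index: the commutator formula
`⁅1 + a eᵢₜ, 1 + b eₜⱼ⁆ = 1 + ab eᵢⱼ` (with a third index `t`) absorbs multiplication on either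
side. The same formula gives `A(M) A(M') ⊆ A(⁅M, M'⁆)`, so a product of `2ᵏ` elements of `A(N)`
lies in `A` of the `k`-th derived subgroup of `N`, which is trivial for `k = n`.
-/

open Multiplicative
open scoped commutatorElement

namespace Subgroup

variable {G : Type*} [Group G]

/-- The derived series of `N`, with its terms as subgroups of `G` rather than of `↥N`. -/
def derivedSeriesOf (N : Subgroup G) : ℕ → Subgroup G
  | 0 => N
  | k + 1 => ⁅derivedSeriesOf N k, derivedSeriesOf N k⁆

@[simp]
theorem derivedSeriesOf_zero (N : Subgroup G) : N.derivedSeriesOf 0 = N :=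
  rfl

theorem derivedSeriesOf_eq_map (N : Subgroup G) (k : ℕ) :
    N.derivedSeriesOf k = (derivedSeries N k).map N.subtype := by
  induction k with
  | zero => rw [derivedSeries_zero, ← MonoidHom.range_eq_map, range_subtype]; rfl
  | succ k ih => rw [derivedSeries_succ, map_commutator, ← ih]; rfl

theorem derivedSeriesOf_mono {N H : Subgroup G} (hNH : N ≤ H) (k : ℕ) :
    N.derivedSeriesOf k ≤ H.derivedSeriesOf k := by
  induction k with
  | zero => exact hNH
  | succ k ih => exact commutator_mono ih ih

theorem index_comap_ne_zero {G' : Type*} [Group G'] (f : G' →* G) {N : Subgroup G}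
    (hN : N.index ≠ 0) : (N.comap f).index ≠ 0 := by
  simpa [relIndex_top_right] using relIndex_comap_ne_zero f (J := N) (K := ⊤) (by simpa)

end Subgroup

theorem Fintype.exists_ne_ne_of_two_lt_card {n : Type*} [Fintype n] [DecidableEq n]
    (hn : 2 < Fintype.card n) (i j : n) : ∃ t, i ≠ t ∧ t ≠ j := by
  obtain ⟨t, hti, htj⟩ := (Finset.univ.erase i).exists_mem_ne
    (by rw [Finset.card_erase_of_mem (Finset.mem_univ i), Finset.card_univ]; omega) j
  exact ⟨t, (Finset.ne_of_mem_erase hti).symm, htj⟩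

namespace Matrix

variable {n R : Type*} [Fintype n] [DecidableEq n] [Ring R] {i j k : n}

theorem one_add_single_mul_one_add_single (hij : i ≠ j) (a b : R) :
    (1 + single i j a) * (1 + single i j b) = 1 + single i j (a + b) := by
  simp [mul_add, add_mul, single_mul_single_of_ne, hij.symm, single_add, add_assoc]

def elementaryHom (hij : i ≠ j) : Multiplicative R →* (Matrix n n R)ˣ where
  toFun a :=
    ⟨1 + single i j a.toAdd, 1 + single i j (-a.toAdd),
      by rw [one_add_single_mul_one_add_single hij, add_neg_cancel, single_zero, add_zero],
      by rw [one_add_single_mul_one_add_single hij, neg_add_cancel, single_zero, add_zero]⟩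
  map_one' := Units.ext (by simp)
  map_mul' a b := Units.ext (one_add_single_mul_one_add_single hij _ _).symm

@[simp]
theorem val_elementaryHom (hij : i ≠ j) (a : R) :
    (elementaryHom hij (ofAdd a) : Matrix n n R) = 1 + single i j a :=
  rfl

theorem elementaryHom_ofAdd_eq_one_iff (hij : i ≠ j) {a : R} :
    elementaryHom hij (ofAdd a) = 1 ↔ a = 0 := by
  refine ⟨fun h => ?_, fun h => by simp [h]⟩
  have hij_entry := congrArg (fun M : Matrix n n R => M i j) (congrArg Units.val h)
  simpa [one_apply, hij] using hij_entry

theorem commutatorElement_elementaryHom (hij : i ≠ j) (hjk : j ≠ k) (hik : i ≠ k) (a b : R) :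
    ⁅elementaryHom hij (ofAdd a), elementaryHom hjk (ofAdd b)⁆ =
      elementaryHom hik (ofAdd (a * b)) := by
  refine Units.ext ?_
  simp only [commutatorElement_def, Units.val_mul, ← map_inv, ← ofAdd_neg, val_elementaryHom,
    ← single_neg, mul_add, add_mul, one_mul, mul_one, mul_neg, neg_mul]
  simp only [single_mul_single_same, ne_eq, hij.symm, hik.symm, hjk.symm, not_false_eq_true,
    single_mul_single_of_ne, add_zero, zero_mul, add_neg_cancel_right]
  abel

def elementaryAddSubgroup (N : Subgroup (Matrix n n R)ˣ) : AddSubgroup R :=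
  ⨅ p : {p : n × n // p.1 ≠ p.2}, (N.comap (elementaryHom p.2)).toAddSubgroup'

theorem mem_elementaryAddSubgroup {N : Subgroup (Matrix n n R)ˣ} {a : R} :
    a ∈ elementaryAddSubgroup N ↔ ∀ i j (hij : i ≠ j), elementaryHom hij (ofAdd a) ∈ N := by
  simp [elementaryAddSubgroup, AddSubgroup.mem_iInf]

instance finiteIndex_elementaryAddSubgroup (N : Subgroup (Matrix n n R)ˣ) [N.FiniteIndex] :
    (elementaryAddSubgroup N).FiniteIndex := by
  refine AddSubgroup.finiteIndex_iInf fun p => ⟨?_⟩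
  exact Subgroup.index_comap_ne_zero (G' := Multiplicative R) (elementaryHom p.2)
    (Subgroup.FiniteIndex.index_ne_zero (H := N))

theorem elementaryAddSubgroup_mono {N M : Subgroup (Matrix n n R)ˣ} (hNM : N ≤ M) :
    elementaryAddSubgroup N ≤ elementaryAddSubgroup M := fun _ ha =>
  mem_elementaryAddSubgroup.2 fun i j hij => hNM (mem_elementaryAddSubgroup.1 ha i j hij)

theorem mem_elementaryAddSubgroup_top (a : R) :
    a ∈ elementaryAddSubgroup (⊤ : Subgroup (Matrix n n R)ˣ) :=
  mem_elementaryAddSubgroup.2 fun _ _ _ => Subgroup.mem_top _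

@[simp]
theorem elementaryAddSubgroup_bot [Nontrivial n] :
    elementaryAddSubgroup (⊥ : Subgroup (Matrix n n R)ˣ) = ⊥ := by
  refine eq_bot_iff.2 fun a ha => ?_
  obtain ⟨i, j, hij⟩ := exists_pair_ne n
  exact (elementaryHom_ofAdd_eq_one_iff hij).1 (mem_elementaryAddSubgroup.1 ha i j hij)

theorem mul_mem_elementaryAddSubgroup_commutator (hn : 2 < Fintype.card n)
    {N M : Subgroup (Matrix n n R)ˣ} {a b : R} (ha : a ∈ elementaryAddSubgroup N)
    (hb : b ∈ elementaryAddSubgroup M) : a * b ∈ elementaryAddSubgroup ⁅N, M⁆ := by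
  refine mem_elementaryAddSubgroup.2 fun i j hij => ?_
  obtain ⟨t, hit, htj⟩ := Fintype.exists_ne_ne_of_two_lt_card hn i j
  rw [← commutatorElement_elementaryHom hit htj hij]
  exact Subgroup.commutator_mem_commutator (mem_elementaryAddSubgroup.1 ha i t hit)
    (mem_elementaryAddSubgroup.1 hb t j htj)

def elementaryIdeal (hn : 2 < Fintype.card n) (N : Subgroup (Matrix n n R)ˣ) [N.Normal] :
    TwoSidedIdeal R :=
  TwoSidedIdeal.mk' (elementaryAddSubgroup N) (zero_mem _) add_mem neg_mem
    (fun hb => elementaryAddSubgroup_mono (Subgroup.commutator_le_right _ _)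
      (mul_mem_elementaryAddSubgroup_commutator hn (mem_elementaryAddSubgroup_top _) hb))
    (fun ha => elementaryAddSubgroup_mono (Subgroup.commutator_le_left _ _)
      (mul_mem_elementaryAddSubgroup_commutator hn ha (mem_elementaryAddSubgroup_top _)))

@[simp]
theorem mem_elementaryIdeal (hn : 2 < Fintype.card n) {N : Subgroup (Matrix n n R)ˣ} [N.Normal]
    {a : R} : a ∈ elementaryIdeal hn N ↔ a ∈ elementaryAddSubgroup N :=
  TwoSidedIdeal.mem_mk' ..

theorem addSubgroup_elementaryIdeal (hn : 2 < Fintype.card n) (N : Subgroup (Matrix n n R)ˣ)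
    [N.Normal] : (elementaryIdeal hn N).addSubgroup = elementaryAddSubgroup N := by
  ext
  exact mem_elementaryIdeal hn

theorem prod_mem_elementaryAddSubgroup_derivedSeriesOf (hn : 2 < Fintype.card n)
    (N : Subgroup (Matrix n n R)ˣ) (k : ℕ) (l : List R) (hl : l.length = 2 ^ k)
    (hmem : ∀ x ∈ l, x ∈ elementaryAddSubgroup N) :
    l.prod ∈ elementaryAddSubgroup (N.derivedSeriesOf k) := by
  induction k generalizing l with
  | zero =>
    obtain ⟨x, rfl⟩ := List.length_eq_one_iff.1 hl
    simpa using hmem x (by simp)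
  | succ k ih =>
    rw [← List.prod_take_mul_prod_drop l (2 ^ k)]
    exact mul_mem_elementaryAddSubgroup_commutator hn
      (ih _ (by simp [hl, pow_succ, mul_two]) fun x hx => hmem x (List.mem_of_mem_take hx))
      (ih _ (by simp [hl, pow_succ, mul_two]) fun x hx => hmem x (List.mem_of_mem_drop hx))

end Matrix

/-- If the group `GL₃(R)` of units of the ring of 3×3 matrices over a unital ring `R`
has a solvable subgroup `H₀` of finite index whose derived series terminates after `n`
steps, then `R` has a two-sided ideal `I` of finite index such that every product of
`2 ^ n` elements of `I` is zero (in particular, a nilpotent two-sided ideal of finite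
index). -/
theorem nilpotent_ideal_of_solvable_finiteIndex_subgroup_GL3
    (R : Type*) [Ring R] (H₀ : Subgroup (Matrix (Fin 3) (Fin 3) R)ˣ)
    (hfi : H₀.FiniteIndex) (n : ℕ) (hsolv : derivedSeries (↥H₀) n = ⊥) :
    ∃ I : TwoSidedIdeal R, I.addSubgroup.FiniteIndex ∧
      ∀ l : List R, l.length = 2 ^ n → (∀ x ∈ l, x ∈ I) → l.prod = 0 := by
  have hn : 2 < Fintype.card (Fin 3) := by simp
  let N := H₀.normalCore
  have hN : N.derivedSeriesOf n = ⊥ := by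
    refine eq_bot_iff.2 ((Subgroup.derivedSeriesOf_mono H₀.normalCore_le n).trans ?_)
    rw [Subgroup.derivedSeriesOf_eq_map, hsolv, Subgroup.map_bot]
  refine ⟨Matrix.elementaryIdeal hn N, ?_, fun l hl hI => ?_⟩
  · rw [Matrix.addSubgroup_elementaryIdeal]
    infer_instance
  · have hprod := Matrix.prod_mem_elementaryAddSubgroup_derivedSeriesOf hn N n l hl
      fun x hx => (Matrix.mem_elementaryIdeal hn).1 (hI x hx)
    rwa [hN, Matrix.elementaryAddSubgroup_bot] at hprod
end

section
/- Let G be a group with an abelian subgroup H of finite index. Then there is a finite subset F of H such that C_G(H) = C_G(F), i.e., the centralizer of H equals the intersection of the centralizers of finitely many elements of H. -/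
/-!
Centralizing `H` means centralizing each `h ∈ H`, so `C_G(H) = ⋂_{h ∈ H} C_G(h)`. Since `H` is
abelian, every `C_G(h)` with `h ∈ H` contains `H`, and a subgroup containing `H` is a union of
cosets of `H`, of which there are finitely many. Hence only finitely many distinct subgroups occur
in the intersection, and one element of `H` for each of them is enough.
-/

theorem exists_finset_subset_biInf_eq_of_finite_image {α ι : Type*} [CompleteLattice α]
    {f : ι → α} {s : Set ι} (hfin : (f '' s).Finite) :
    ∃ t : Finset ι, ↑t ⊆ s ∧ ⨅ i ∈ t, f i = ⨅ i ∈ s, f i := by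
  obtain ⟨u, hus, hinj, himage⟩ := (Set.surjOn_image f s).exists_subset_injOn_image_eq
  have hu : u.Finite := Set.Finite.of_finite_image (himage ▸ hfin) hinj
  refine ⟨hu.toFinset, by simpa using hus, ?_⟩
  simp only [Set.Finite.mem_toFinset]
  rw [← sInf_image, himage, sInf_image]

theorem QuotientGroup.preimage_image_mk_eq_of_le {G : Type*} [Group G] {H K : Subgroup G}
    (hHK : H ≤ K) : mk ⁻¹' ((mk : G → G ⧸ H) '' K) = K := by
  rw [preimage_image_mk_eq_mul]
  exact (Subgroup.mul_subset subset_rfl hHK).antisymm (Set.subset_mul_left _ H.one_mem)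

namespace Subgroup

variable {G : Type*} [Group G]

theorem finite_setOf_le_of_finiteIndex (H : Subgroup G) [H.FiniteIndex] :
    {K : Subgroup G | H ≤ K}.Finite := by
  refine Set.Finite.of_finite_image (Set.toFinite _)
    (f := fun K : Subgroup G ↦ (QuotientGroup.mk '' K : Set (G ⧸ H))) fun K hK L hL hKL ↦ ?_
  apply SetLike.coe_injective
  rw [← QuotientGroup.preimage_image_mk_eq_of_le hK, ← QuotientGroup.preimage_image_mk_eq_of_le hL]
  exact congrArg _ hKL

theorem exists_finset_centralizer_eq_of_finiteIndex_le_centralizer {S : Set G} (H : Subgroup G)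
    [H.FiniteIndex] (hH : H ≤ centralizer S) :
    ∃ F : Finset G, ↑F ⊆ S ∧ centralizer S = centralizer (F : Set G) := by
  have hfin : ((fun g ↦ centralizer {g}) '' S).Finite :=
    H.finite_setOf_le_of_finiteIndex.subset <| Set.image_subset_iff.2 fun g hg ↦
      hH.trans (centralizer_le (Set.singleton_subset_iff.2 hg))
  obtain ⟨F, hFS, hF⟩ := exists_finset_subset_biInf_eq_of_finite_image hfin
  refine ⟨F, hFS, ?_⟩
  rw [centralizer_eq_iInf, centralizer_eq_iInf, ← hF]
  simp only [Finset.mem_coe]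

end Subgroup

/-- If `G` is a group with an abelian subgroup `H` of finite index, then the
centralizer of `H` is the centralizer of a finite subset of `H`. -/
theorem centralizer_eq_centralizer_finset_of_abelian_finiteIndex
    (G : Type*) [Group G] (H : Subgroup G)
    (hab : ∀ a ∈ H, ∀ b ∈ H, a * b = b * a) (hfi : H.FiniteIndex) :
    ∃ F : Finset G, (F : Set G) ⊆ (H : Set G) ∧
      Subgroup.centralizer (H : Set G) = Subgroup.centralizer (F : Set G) :=
  H.exists_finset_centralizer_eq_of_finiteIndex_le_centralizer
    fun b hb _ ha ↦ hab _ ha b hb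
end

section
/- Let R be a ring with a null two-sided ideal S of finite index. Then Ann_R(Ann_R(S)), the two-sided annihilator of the two-sided annihilator of S, is a null two-sided ideal of R of finite index which contains S. -/
/-- The two-sided annihilator of a set \`s\` in a ring: all \`r\` with \`r * s = s * r = 0\`
for every \`s ∈ s\`. -/
def annSet {R : Type*} [NonUnitalNonAssocRing R] (s : Set R) : Set R :=
  {r : R | ∀ a ∈ s, r * a = 0 ∧ a * r = 0}

/-!
Since `S` is null, `S ⊆ Ann S`; annihilators reverse inclusions, so `S ⊆ Ann (Ann S) ⊆ Ann S`.
Hence `Ann (Ann S)` is null (its elements annihilate `Ann S`, which contains it), and it has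
finite index because it contains `S`.
-/

section Annihilator

variable {R : Type*} [NonUnitalNonAssocRing R] {s t : Set R}

lemma annSet_anti (h : s ⊆ t) : annSet t ⊆ annSet s :=
  fun _ hr a ha => hr a (h ha)

lemma subset_annSet_annSet : s ⊆ annSet (annSet s) :=
  fun a ha _ hr => (hr a ha).symm

lemma subset_annSet_of_mul_eq_zero (h : ∀ x ∈ s, ∀ y ∈ s, x * y = 0) : s ⊆ annSet s :=
  fun x hx y hy => ⟨h x hx y hy, h y hy x hx⟩

lemma mul_eq_zero_of_mem_annSet_annSet (h : s ⊆ annSet s) :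
    ∀ x ∈ annSet (annSet s), ∀ y ∈ annSet (annSet s), x * y = 0 :=
  fun _ hx _ hy => (hx _ (annSet_anti h hy)).1

end Annihilator

namespace TwoSidedIdeal

variable {R : Type*} [NonUnitalRing R]

def annihilator (I : TwoSidedIdeal R) : TwoSidedIdeal R :=
  mk' (annSet I)
    (fun a _ => ⟨zero_mul a, mul_zero a⟩)
    (fun hx hy a ha => ⟨by rw [add_mul, (hx a ha).1, (hy a ha).1, add_zero],
      by rw [mul_add, (hx a ha).2, (hy a ha).2, add_zero]⟩)
    (fun hx a ha => ⟨by rw [neg_mul, (hx a ha).1, neg_zero],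
      by rw [mul_neg, (hx a ha).2, neg_zero]⟩)
    (fun {r _} hx a ha => ⟨by rw [mul_assoc, (hx a ha).1, mul_zero],
      by rw [← mul_assoc, (hx (a * r) (I.mul_mem_right _ _ ha)).2]⟩)
    (fun {_ r} hx a ha => ⟨by rw [mul_assoc, (hx (r * a) (I.mul_mem_left _ _ ha)).1],
      by rw [← mul_assoc, (hx a ha).2, zero_mul]⟩)

@[simp]
lemma coe_annihilator (I : TwoSidedIdeal R) : (I.annihilator : Set R) = annSet I :=
  coe_mk' _ _ _ _ _ _

lemma addSubgroup_mono {I J : TwoSidedIdeal R} (h : (I : Set R) ⊆ J) :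
    I.addSubgroup ≤ J.addSubgroup :=
  fun _ hx => h hx

end TwoSidedIdeal

/-- If `S` is a null two-sided ideal of finite index of a ring `R`, then
`Ann_R(Ann_R(S))` is a null two-sided ideal of finite index of `R` containing `S`. -/
theorem annihilator_annihilator_of_null_ideal_finiteIndex
    (R : Type*) [NonUnitalRing R] (S : TwoSidedIdeal R)
    (hnull : ∀ x ∈ S, ∀ y ∈ S, x * y = 0)
    (hfi : S.addSubgroup.FiniteIndex) :
    ∃ I : TwoSidedIdeal R,
      (I : Set R) = annSet (annSet (S : Set R)) ∧
      I.addSubgroup.FiniteIndex ∧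
      (∀ x ∈ I, ∀ y ∈ I, x * y = 0) ∧
      (S : Set R) ⊆ (I : Set R) := by
  have hI : (S.annihilator.annihilator : Set R) = annSet (annSet (S : Set R)) := by simp
  have hSI : (S : Set R) ⊆ S.annihilator.annihilator := hI ▸ subset_annSet_annSet
  refine ⟨S.annihilator.annihilator, hI, ?_, ?_, hSI⟩
  · exact AddSubgroup.finiteIndex_of_le (TwoSidedIdeal.addSubgroup_mono hSI)
  · simpa only [← SetLike.mem_coe, hI] using
      mul_eq_zero_of_mem_annSet_annSet (subset_annSet_of_mul_eq_zero hnull)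
end

section
/- Let R be a ring with a null two-sided ideal S of finite index. Then there is a finite subset F of S such that Ann_R(S) = Ann_R(F), i.e., the two-sided annihilator of S equals the intersection of the two-sided annihilators of finitely many elements of S. -/
theorem exists_finset_subset_forall_iff_of_finite {ι α : Type*} [Finite α] (s : Set ι)
    (P : ι → α → Prop) :
    ∃ F : Finset ι, (F : Set ι) ⊆ s ∧ ∀ x, (∀ i ∈ F, P i x) ↔ ∀ i ∈ s, P i x := by
  classical
  have : Fintype α := Fintype.ofFinite α
  have witness : ∀ x, ∃ G : Finset ι, (G : Set ι) ⊆ s ∧ ((∀ i ∈ G, P i x) → ∀ i ∈ s, P i x) := by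
    intro x
    by_cases hx : ∀ i ∈ s, P i x
    · exact ⟨∅, by simp, fun _ => hx⟩
    · push Not at hx
      obtain ⟨i, hi, hPi⟩ := hx
      exact ⟨{i}, by simpa using hi, fun h => absurd (h i (Finset.mem_singleton_self i)) hPi⟩
  choose G hGs hG using witness
  refine ⟨Finset.univ.biUnion G, by simpa using hGs, fun x => ⟨fun h => ?_, fun h i hi => ?_⟩⟩
  · exact hG x fun i hi => h i (Finset.mem_biUnion.2 ⟨x, Finset.mem_univ x, hi⟩)
  · obtain ⟨y, -, hiy⟩ := Finset.mem_biUnion.1 hi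
    exact h i (hGs y hiy)

section NullIdeal

variable {R : Type*} [NonUnitalRing R] {S : TwoSidedIdeal R}

theorem mul_eq_mul_of_sub_mem_of_null (hnull : ∀ x ∈ S, ∀ y ∈ S, x * y = 0) {x y a : R}
    (hxy : x - y ∈ S) (ha : a ∈ S) : x * a = y * a ∧ a * x = a * y := by
  have hl := hnull _ hxy a ha
  have hr := hnull a ha _ hxy
  rw [sub_mul, sub_eq_zero] at hl
  rw [mul_sub, sub_eq_zero] at hr
  exact ⟨hl, hr⟩

theorem mem_annSet_iff_of_sub_mem_of_null (hnull : ∀ x ∈ S, ∀ y ∈ S, x * y = 0) {s : Set R}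
    (hs : s ⊆ S) {x y : R} (hxy : x - y ∈ S) : x ∈ annSet s ↔ y ∈ annSet s := by
  refine forall₂_congr fun a ha => ?_
  obtain ⟨hl, hr⟩ := mul_eq_mul_of_sub_mem_of_null hnull hxy (hs ha)
  rw [hl, hr]

end NullIdeal

/-- If `S` is a null two-sided ideal of finite index of a ring `R`, then the two-sided
annihilator of `S` is the two-sided annihilator of a finite subset of `S`. -/
theorem annihilator_eq_annihilator_finset_of_null_ideal_finiteIndex
    (R : Type*) [NonUnitalRing R] (S : TwoSidedIdeal R)
    (hnull : ∀ x ∈ S, ∀ y ∈ S, x * y = 0)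
    (hfi : S.addSubgroup.FiniteIndex) :
    ∃ F : Finset R, (F : Set R) ⊆ (S : Set R) ∧
      annSet (S : Set R) = annSet (F : Set R) := by
  obtain ⟨F, hFS, hF⟩ := exists_finset_subset_forall_iff_of_finite (α := R ⧸ S.addSubgroup)
    (S : Set R) fun a q => q.out * a = 0 ∧ a * q.out = 0
  refine ⟨F, hFS, Set.ext fun r => ?_⟩
  set q : R ⧸ S.addSubgroup := QuotientAddGroup.mk r
  have hq : q.out - r ∈ S := by
    obtain ⟨h, hh⟩ := QuotientAddGroup.mk_out_eq_add S.addSubgroup r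
    rw [hh, add_sub_cancel_left]
    exact h.2
  calc r ∈ annSet (S : Set R) ↔ q.out ∈ annSet (S : Set R) :=
        (mem_annSet_iff_of_sub_mem_of_null hnull le_rfl hq).symm
    _ ↔ q.out ∈ annSet (F : Set R) := (hF q).symm
    _ ↔ r ∈ annSet F := mem_annSet_iff_of_sub_mem_of_null hnull hFS hq
end

section
/- Let H be a Hausdorff topological group with an abelian subgroup A of finite index. Then there is a finite subset F of A such that C_H(F) = C_H(A) and Z(C_H(F)) is a closed abelian subgroup of H of finite index containing A; consequently, every group automorphism of H fixing F pointwise maps Z(C_H(F)) onto itself. -/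
/-!
Since `A` is abelian, the centralizer of every finite `F ⊆ A` contains `A`, so its index is at
most `[H : A]`. Choosing `F` with index as large as possible, adding any `a ∈ A` to `F` cannot
shrink the centralizer further, whence `C_H(F) = C_H(A)`. Then `Z := C_H(F) ∩ C_H(C_H(F))`
is an intersection of centralizers, hence closed in a Hausdorff group; it is abelian and
contains `A`, and an automorphism fixing `F` preserves `C_H(F)`, hence also `C_H(C_H(F))`.
-/

theorem MulEquiv.image_centralizer {M N : Type*} [Mul M] [Mul N] (e : M ≃* N) (s : Set M) :
    e '' s.centralizer = (e '' s).centralizer := by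
  ext y
  constructor
  · rintro ⟨x, hx, rfl⟩ - ⟨m, hm, rfl⟩
    rw [← map_mul, ← map_mul, hx m hm]
  · intro hy
    refine ⟨e.symm y, fun m hm => e.injective ?_, e.apply_symm_apply y⟩
    simpa only [map_mul, e.apply_symm_apply] using hy (e m) ⟨m, hm, rfl⟩

namespace Subgroup

variable {G : Type*} [Group G]

theorem exists_finset_subset_centralizer_eq {s : Set G} {K : Subgroup G} [K.FiniteIndex]
    (hK : K ≤ centralizer s) :
    ∃ F : Finset G, (F : Set G) ⊆ s ∧ centralizer (F : Set G) = centralizer s := by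
  classical
  have hKF : ∀ F : Finset G, (F : Set G) ⊆ s → K ≤ centralizer (F : Set G) :=
    fun F hF => hK.trans (centralizer_le hF)
  obtain ⟨_, ⟨F, hFs, rfl⟩, hmax⟩ : ∃ n, IsGreatest
      ((fun F : Finset G => (centralizer (F : Set G)).index) '' {F | (F : Set G) ⊆ s}) n := by
    refine BddAbove.exists_isGreatest_of_nonempty ⟨K.index, ?_⟩ ⟨_, ∅, by simp, rfl⟩
    rintro _ ⟨F, hF, rfl⟩
    exact index_antitone (hKF F hF)
  refine ⟨F, hFs, le_antisymm (fun g hg a ha => ?_) (centralizer_le hFs)⟩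
  have hinsert_sub : ((insert a F : Finset G) : Set G) ⊆ s := by
    simpa only [Finset.coe_insert] using Set.insert_subset ha hFs
  have hinsert : centralizer ((insert a F : Finset G) : Set G) = centralizer (F : Set G) := by
    by_contra hne
    have := finiteIndex_of_le (hKF _ hinsert_sub)
    exact (index_strictAnti (lt_of_le_of_ne (centralizer_le (by simp)) hne)).not_ge
      (hmax ⟨_, hinsert_sub, rfl⟩)
  exact (hinsert ▸ hg : g ∈ centralizer ((insert a F : Finset G) : Set G)) a (by simp)

theorem mul_comm_of_mem_centralizer_inf_centralizer_centralizer (s : Set G) :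
    ∀ a ∈ centralizer s ⊓ centralizer (centralizer s : Set G),
      ∀ b ∈ centralizer s ⊓ centralizer (centralizer s : Set G), a * b = b * a :=
  fun a ha _ hb => hb.2 a ha.1

theorem le_centralizer_inf_centralizer_centralizer {A : Subgroup G} (hA : A ≤ centralizer A)
    {s : Set G} (hs : centralizer s = centralizer A) :
    A ≤ centralizer s ⊓ centralizer (centralizer s : Set G) := by
  rw [hs]
  exact le_inf hA (le_centralizer_iff.mp le_rfl)

theorem image_centralizer_inf_centralizer_centralizer {s : Set G} (e : G ≃* G) (hs : e '' s = s) :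
    e '' (centralizer s ⊓ centralizer (centralizer s : Set G) : Subgroup G) =
      (centralizer s ⊓ centralizer (centralizer s : Set G) : Subgroup G) := by
  have hc : ∀ t : Set G, e '' t = t → e '' (centralizer t : Set G) = centralizer t :=
    fun t ht => by
      change e '' t.centralizer = t.centralizer
      rw [e.image_centralizer, ht]
  rw [coe_inf, Set.image_inter e.injective, hc s hs, hc _ (hc s hs)]

end Subgroup

open Subgroup in
/-- Let `H` be a Hausdorff topological group with an abelian subgroup `A` of finite
index.  Then there is a finite subset `F ⊆ A` with `C_H(F) = C_H(A)`, such that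
`Z(C_H(F)) = C_H(F) ⊓ C_H(C_H(F))` is a closed abelian subgroup of finite index
containing `A`; consequently, every group automorphism of `H` fixing `F` pointwise maps
`Z(C_H(F))` onto itself. -/
theorem closed_abelian_finiteIndex_subgroup_of_abelian_finiteIndex
    (H : Type*) [Group H] [TopologicalSpace H] [IsTopologicalGroup H] [T2Space H]
    (A : Subgroup H) (hab : ∀ a ∈ A, ∀ b ∈ A, a * b = b * a) (hfi : A.FiniteIndex) :
    ∃ F : Finset H, (F : Set H) ⊆ (A : Set H) ∧
      Subgroup.centralizer (F : Set H) = Subgroup.centralizer (A : Set H) ∧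
      ∀ Z : Subgroup H,
        Z = Subgroup.centralizer (F : Set H) ⊓
              Subgroup.centralizer ((Subgroup.centralizer (F : Set H) : Subgroup H) : Set H) →
        IsClosed (Z : Set H) ∧ (∀ a ∈ Z, ∀ b ∈ Z, a * b = b * a) ∧ Z.FiniteIndex ∧
          A ≤ Z ∧ ∀ φ : H ≃* H, (∀ x ∈ F, φ x = x) → φ '' (Z : Set H) = (Z : Set H) := by
  have hA : A ≤ centralizer A := fun a ha b hb => hab b hb a ha
  obtain ⟨F, hFA, hF⟩ := exists_finset_subset_centralizer_eq hA
  refine ⟨F, hFA, hF, fun Z hZ => ?_⟩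
  subst hZ
  have hAZ := le_centralizer_inf_centralizer_centralizer hA hF
  exact ⟨(Set.isClosed_centralizer _).inter (Set.isClosed_centralizer _),
    mul_comm_of_mem_centralizer_inf_centralizer_centralizer _, finiteIndex_of_le hAZ, hAZ,
    fun φ hφ => image_centralizer_inf_centralizer_centralizer φ (Set.EqOn.image_eq_self hφ)⟩
end

section
/- Let R be a Hausdorff topological ring with a nilpotent two-sided ideal S of finite index. Then there exist a finite subset F of R and a closed nilpotent two-sided ideal I of R of finite index with S ⊆ I, such that every ring automorphism of R fixing F pointwise maps I onto itself. -/
/-!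
Nilpotent ideals are closed under sums: a product of `a * b` elements of `I ⊔ J` splits into `b`
blocks of `a` factors, each of which lies in `J` when `I` is nilpotent of index `a`. Hence a
nilpotent ideal containing `S` of minimal index is the largest nilpotent ideal of `R`. Its closure
(as `{0}` is closed) and its images under automorphisms are nilpotent too, so it is closed and
invariant under every automorphism, and `F = ∅` works.
-/

section listProd

variable {M : Type*}

theorem listProd_append [Mul M] (x : M) (l₁ l₂ : List M) :
    listProd x (l₁ ++ l₂) = listProd (listProd x l₁) l₂ := by
  induction l₁ generalizing x with
  | nil => rfl
  | cons y l ih => exact ih (x * y)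

theorem listProd_concat [Mul M] (x : M) (l : List M) (y : M) :
    listProd x (l ++ [y]) = listProd x l * y := by
  rw [listProd_append]
  rfl

theorem mul_listProd [Semigroup M] (z x : M) (l : List M) :
    z * listProd x l = listProd (z * x) l := by
  induction l generalizing x with
  | nil => rfl
  | cons y l ih =>
    show z * listProd (x * y) l = listProd (z * x * y) l
    rw [ih, mul_assoc]

theorem listProd_append_cons [Semigroup M] (x : M) (l₁ : List M) (y : M) (l₂ : List M) :
    listProd x (l₁ ++ y :: l₂) = listProd x l₁ * listProd y l₂ := by
  rw [listProd_append, mul_listProd]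
  rfl

end listProd

def prodSet {M : Type*} [Mul M] (s : Set M) (k : ℕ) : Set M :=
  {v | ∃ x ∈ s, ∃ l : List M, (∀ y ∈ l, y ∈ s) ∧ l.length + 1 = k ∧ listProd x l = v}

section prodSet

variable {M : Type*}

theorem prodSet_one [Mul M] (s : Set M) : prodSet s 1 = s := by
  ext v
  constructor
  · rintro ⟨x, hx, l, -, hl, rfl⟩
    obtain rfl : l = [] := List.length_eq_zero_iff.1 (by omega)
    exact hx
  · exact fun hv => ⟨v, hv, [], by simp, rfl, rfl⟩

theorem prodSet_subset_zero_iff [Mul M] [Zero M] {s : Set M} {k : ℕ} :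
    prodSet s k ⊆ {0} ↔
      ∀ x ∈ s, ∀ l : List M, (∀ y ∈ l, y ∈ s) → l.length + 1 = k → listProd x l = 0 :=
  ⟨fun h x hx l hl hk => h ⟨x, hx, l, hl, hk, rfl⟩,
    by rintro h _ ⟨x, hx, l, hl, hk, rfl⟩; exact h x hx l hl hk⟩

theorem mul_mem_prodSet [Mul M] {s : Set M} {k : ℕ} {u y : M} (hu : u ∈ prodSet s k)
    (hy : y ∈ s) : u * y ∈ prodSet s (k + 1) := by
  obtain ⟨x, hx, l, hl, rfl, rfl⟩ := hu
  refine ⟨x, hx, l ++ [y], ?_, by simp, listProd_concat x l y⟩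
  simpa [or_imp, forall_and] using ⟨hl, hy⟩

theorem prodSet_subset_of_forall_mul_mem [Mul M] {s : Set M} (T : ℕ → Set M) (hs : s ⊆ T 1)
    (hmul : ∀ k, ∀ u ∈ T k, ∀ y ∈ s, u * y ∈ T (k + 1)) (k : ℕ) : prodSet s k ⊆ T k := by
  suffices key : ∀ l : List M, (∀ y ∈ l, y ∈ s) → ∀ j x, x ∈ T j →
      listProd x l ∈ T (j + l.length) by
    rintro _ ⟨x, hx, l, hl, rfl, rfl⟩
    rw [add_comm]
    exact key l hl 1 x (hs hx)
  intro l
  induction l with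
  | nil => exact fun _ j x hx => hx
  | cons y l ih =>
    intro hl j x hx
    have := ih (fun z hz => hl z (List.mem_cons_of_mem y hz)) (j + 1) (x * y)
      (hmul j x hx y (hl y List.mem_cons_self))
    rwa [List.length_cons, ← add_assoc, add_right_comm]

theorem prodSet_mono [Mul M] {s t : Set M} (h : s ⊆ t) (k : ℕ) : prodSet s k ⊆ prodSet t k :=
  prodSet_subset_of_forall_mul_mem (prodSet t) (by rw [prodSet_one]; exact h)
    (fun _ _ hu _ hy => mul_mem_prodSet hu (h hy)) k

theorem prodSet_add [Semigroup M] {s : Set M} {i j : ℕ} (hi : 1 ≤ i) (hj : 1 ≤ j) {v : M}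
    (hv : v ∈ prodSet s (i + j)) : ∃ u ∈ prodSet s i, ∃ w ∈ prodSet s j, v = u * w := by
  obtain ⟨x, hx, l, hl, hlen, rfl⟩ := hv
  obtain ⟨y, l₂, hdrop⟩ := List.exists_cons_of_length_pos (l := l.drop (i - 1))
    (by simp only [List.length_drop]; omega)
  have hsplit : l = l.take (i - 1) ++ y :: l₂ := by rw [← hdrop, List.take_append_drop]
  have hdrop_mem : ∀ z ∈ y :: l₂, z ∈ s := fun z hz =>
    hl z (List.mem_of_mem_drop (hdrop ▸ hz))
  have hhead : listProd x (l.take (i - 1)) ∈ prodSet s i :=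
    ⟨x, hx, _, fun z hz => hl z (List.mem_of_mem_take hz),
      by simp only [List.length_take]; omega, rfl⟩
  have htail : listProd y l₂ ∈ prodSet s j := by
    refine ⟨y, hdrop_mem y List.mem_cons_self, l₂,
      fun z hz => hdrop_mem z (List.mem_cons_of_mem y hz), ?_, rfl⟩
    have := congrArg List.length hdrop
    simp only [List.length_drop, List.length_cons] at this
    omega
  refine ⟨_, hhead, _, htail, ?_⟩
  conv_lhs => rw [hsplit]
  exact listProd_append_cons x _ y l₂

theorem prodSet_mul_subset [Semigroup M] (s : Set M) {a : ℕ} (ha : 1 ≤ a) {k : ℕ} (hk : 1 ≤ k) :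
    prodSet s (a * k) ⊆ prodSet (prodSet s a) k := by
  induction k, hk using Nat.le_induction with
  | base => rw [mul_one, prodSet_one]
  | succ k hk ih =>
    intro v hv
    rw [mul_add_one] at hv
    obtain ⟨u, hu, w, hw, rfl⟩ := prodSet_add (Nat.one_le_iff_ne_zero.2 (by positivity)) ha hv
    exact mul_mem_prodSet (ih hu) hw

theorem prodSet_con [Mul M] (c : Con M) {s t : Set M} (hts : ∀ y ∈ t, ∃ y' ∈ s, c y y') (k : ℕ) :
    ∀ v ∈ prodSet t k, ∃ v' ∈ prodSet s k, c v v' :=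
  prodSet_subset_of_forall_mul_mem (fun k => {v | ∃ v' ∈ prodSet s k, c v v'})
    (fun y hy => by
      show ∃ v' ∈ prodSet s 1, c y v'
      rw [prodSet_one]
      exact hts y hy)
    (fun _ _ ⟨u', hu', hu⟩ y hy => by
      obtain ⟨y', hy', hyy'⟩ := hts y hy
      exact ⟨u' * y', mul_mem_prodSet hu' hy', c.mul hu hyy'⟩) k

theorem prodSet_image_subset [Mul M] {N : Type*} [Mul N] (f : M →ₙ* N) (s : Set M) (k : ℕ) :
    prodSet (f '' s) k ⊆ f '' prodSet s k :=
  prodSet_subset_of_forall_mul_mem (fun k => f '' prodSet s k) (by rw [prodSet_one])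
    (by
      rintro _ _ ⟨u, hu, rfl⟩ _ ⟨y, hy, rfl⟩
      exact ⟨u * y, mul_mem_prodSet hu hy, map_mul f u y⟩) k

theorem prodSet_closure_subset [Mul M] [TopologicalSpace M] [ContinuousMul M] (s : Set M)
    (k : ℕ) : prodSet (closure s) k ⊆ closure (prodSet s k) :=
  prodSet_subset_of_forall_mul_mem (fun k => closure (prodSet s k)) (by rw [prodSet_one])
    (fun _ _ hu _ hy => map_mem_closure₂ continuous_mul hu hy
      fun _ ha _ hb => mul_mem_prodSet ha hb) k

end prodSet

namespace TwoSidedIdeal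

section Ring

variable {R : Type*} [NonUnitalRing R]

/-- `1 ≤ m` matters: `prodSet s 0 = ∅`, so `m = 0` would make every ideal nilpotent. -/
def IsNilpotent (I : TwoSidedIdeal R) : Prop :=
  ∃ m, 1 ≤ m ∧ prodSet (I : Set R) m ⊆ {0}

/-- Modulo `J`, every element of `I ⊔ J` is congruent to one of `I`. -/
theorem prodSet_sup_subset {I J : TwoSidedIdeal R} {a : ℕ} (hI : prodSet (I : Set R) a ⊆ {0}) :
    prodSet ((I ⊔ J : TwoSidedIdeal R) : Set R) a ⊆ J := by
  intro v hv
  obtain ⟨v', hv', hvv'⟩ := prodSet_con J.ringCon.toCon (s := I) (fun y hy => by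
    obtain ⟨p, hp, q, hq, rfl⟩ := mem_sup.1 hy
    exact ⟨p, hp, (J.rel_iff _ _).2 (by simpa using hq)⟩) a v hv
  rw [hI hv'] at hvv'
  simpa using (J.rel_iff _ _).1 hvv'

theorem IsNilpotent.sup {I J : TwoSidedIdeal R} (hI : I.IsNilpotent) (hJ : J.IsNilpotent) :
    (I ⊔ J).IsNilpotent := by
  obtain ⟨a, ha, hIa⟩ := hI
  obtain ⟨b, hb, hJb⟩ := hJ
  refine ⟨a * b, Nat.one_le_iff_ne_zero.2 (by positivity), ?_⟩
  calc prodSet ((I ⊔ J : TwoSidedIdeal R) : Set R) (a * b)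
      ⊆ prodSet (prodSet ((I ⊔ J : TwoSidedIdeal R) : Set R) a) b := prodSet_mul_subset _ ha hb
    _ ⊆ prodSet (J : Set R) b := prodSet_mono (prodSet_sup_subset hIa) b
    _ ⊆ {0} := hJb

theorem coe_mapTwoSidedIdeal {S : Type*} [NonUnitalRing S] (e : R ≃+* S) (I : TwoSidedIdeal R) :
    (e.mapTwoSidedIdeal I : Set S) = e '' I := by
  ext x
  rw [RingEquiv.mapTwoSidedIdeal_apply, SetLike.mem_coe, mem_comap]
  exact ⟨fun h => ⟨_, h, e.apply_symm_apply x⟩, by rintro ⟨y, hy, rfl⟩; simpa⟩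

theorem IsNilpotent.map {S : Type*} [NonUnitalRing S] {I : TwoSidedIdeal R} (hI : I.IsNilpotent)
    (e : R ≃+* S) : (e.mapTwoSidedIdeal I).IsNilpotent := by
  obtain ⟨m, hm, hIm⟩ := hI
  refine ⟨m, hm, ?_⟩
  rw [coe_mapTwoSidedIdeal]
  calc prodSet (e '' I) m ⊆ e '' prodSet (I : Set R) m :=
        prodSet_image_subset (e : R →ₙ* S) _ m
    _ ⊆ e '' {0} := Set.image_mono hIm
    _ = {0} := by simp

/-- A nilpotent ideal containing `S` of minimal index is the greatest one: adding any nilpotent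
ideal to it keeps it nilpotent without lowering the index. -/
theorem exists_isGreatest_isNilpotent {S : TwoSidedIdeal R} (hS : S.IsNilpotent)
    (hfi : S.addSubgroup.FiniteIndex) :
    ∃ I : TwoSidedIdeal R, IsGreatest {J | J.IsNilpotent} I := by
  obtain ⟨I, ⟨hSI, hI⟩, hmin⟩ :=
    (measure fun J : TwoSidedIdeal R => J.addSubgroup.index).wf.has_min
      {J | S ≤ J ∧ J.IsNilpotent} ⟨S, le_rfl, hS⟩
  have hIfi : I.addSubgroup.FiniteIndex := AddSubgroup.finiteIndex_of_le (H := S.addSubgroup) hSI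
  refine ⟨I, hI, fun J hJ => ?_⟩
  have hIK : I ≤ J ⊔ I := le_sup_right
  by_contra hJI
  have hKI : ¬ J ⊔ I ≤ I := fun h => hJI (le_sup_left.trans h)
  exact hmin (J ⊔ I) ⟨hSI.trans hIK, hJ.sup hI⟩
    (AddSubgroup.index_strictAnti (H := I.addSubgroup) (K := (J ⊔ I).addSubgroup)
      (lt_of_le_not_ge hIK hKI))

end Ring

section Topology

variable {R : Type*} [NonUnitalRing R] [TopologicalSpace R] [IsTopologicalRing R]

def topologicalClosure (I : TwoSidedIdeal R) : TwoSidedIdeal R :=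
  .mk' (closure I) (subset_closure I.zero_mem)
    (fun hx hy => map_mem_closure₂ continuous_add hx hy fun _ ha _ hb => I.add_mem ha hb)
    (fun hx => map_mem_closure continuous_neg hx fun _ ha => I.neg_mem ha)
    (fun hy => map_mem_closure (continuous_const_mul _) hy fun _ ha => I.mul_mem_left _ _ ha)
    (fun {_ y} hx => map_mem_closure (f := (· * y)) (continuous_mul_const y) hx
      fun _ ha => I.mul_mem_right _ _ ha)

theorem coe_topologicalClosure (I : TwoSidedIdeal R) :
    (I.topologicalClosure : Set R) = closure I := by
  rw [topologicalClosure, coe_mk']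

theorem IsNilpotent.topologicalClosure [T1Space R] {I : TwoSidedIdeal R} (hI : I.IsNilpotent) :
    I.topologicalClosure.IsNilpotent := by
  obtain ⟨m, hm, hIm⟩ := hI
  refine ⟨m, hm, ?_⟩
  rw [coe_topologicalClosure]
  calc prodSet (closure (I : Set R)) m ⊆ closure (prodSet (I : Set R) m) :=
        prodSet_closure_subset _ m
    _ ⊆ closure {0} := closure_mono hIm
    _ = {0} := closure_singleton

end Topology

end TwoSidedIdeal

open TwoSidedIdeal in
/-- Let `R` be a Hausdorff topological ring with a nilpotent two-sided ideal `S` of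
finite index (nilpotent: for some `n ≥ 1`, every product of `n` elements of `S` is
zero).  Then there exist a finite subset `F` of `R` and a closed nilpotent two-sided
ideal `I` of finite index with `S ⊆ I`, such that every ring automorphism of `R`
fixing `F` pointwise maps `I` onto itself. -/
theorem closed_nilpotent_ideal_of_nilpotent_ideal_finiteIndex
    (R : Type*) [NonUnitalRing R] [TopologicalSpace R] [IsTopologicalRing R] [T2Space R]
    (S : TwoSidedIdeal R) (n : ℕ) (hn : 1 ≤ n)
    (hnilp : ∀ x ∈ S, ∀ l : List R, (∀ y ∈ l, y ∈ S) → l.length + 1 = n →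
      listProd x l = 0)
    (hfi : S.addSubgroup.FiniteIndex) :
    ∃ (F : Finset R) (I : TwoSidedIdeal R),
      IsClosed (I : Set R) ∧
      (∃ m : ℕ, 1 ≤ m ∧ ∀ x ∈ I, ∀ l : List R, (∀ y ∈ l, y ∈ I) → l.length + 1 = m →
        listProd x l = 0) ∧
      I.addSubgroup.FiniteIndex ∧
      (S : Set R) ⊆ (I : Set R) ∧
      ∀ φ : R ≃+* R, (∀ x ∈ F, φ x = x) → φ '' (I : Set R) = (I : Set R) := by
  have hS : S.IsNilpotent := ⟨n, hn, prodSet_subset_zero_iff.2 hnilp⟩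
  obtain ⟨I, hI, hImax⟩ := exists_isGreatest_isNilpotent hS hfi
  have hSI : S ≤ I := hImax hS
  have hclosed : IsClosed (I : Set R) := isClosed_of_closure_subset <| by
    rw [← coe_topologicalClosure]
    exact hImax hI.topologicalClosure
  have hchar (φ : R ≃+* R) : φ.mapTwoSidedIdeal I = I :=
    le_antisymm (hImax (hI.map φ)) <| by
      rw [← OrderIso.symm_apply_le, RingEquiv.mapTwoSidedIdeal_symm]
      exact hImax (hI.map φ.symm)
  obtain ⟨m, hm, hIm⟩ := hI
  refine ⟨∅, I, hclosed, ⟨m, hm, prodSet_subset_zero_iff.1 hIm⟩,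
    AddSubgroup.finiteIndex_of_le (H := S.addSubgroup) hSI, hSI, fun φ _ => ?_⟩
  rw [← coe_mapTwoSidedIdeal, hchar]
end

section
/- Let F be a finite field, V a nonzero F-vector space, H a commutative subgroup of the group of F-linear automorphisms of V, and v ∈ V such that V is the F-linear span of the orbit {h(v) : h ∈ H}. Let R be the subring of the endomorphism ring of V (as an F-vector space) generated by the elements of H. If R has a nilpotent two-sided ideal of finite index (as an additive subgroup of R), then V contains a nonzero finite-dimensional F-subspace W with h(W) ⊆ W for all h ∈ H. -/
theorem exists_ne_zero_forall_smul_eq_zero_of_prod_eq_zero {R M : Type*} [Ring R]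
    [AddCommGroup M] [Module R M] [Nontrivial M] (s : Set R) (n : ℕ)
    (hnil : ∀ l : List R, l.length = n → (∀ x ∈ l, x ∈ s) → l.prod = 0) :
    ∃ m : M, m ≠ 0 ∧ ∀ x ∈ s, x • m = 0 := by
  by_contra! hmove
  obtain ⟨m₀, hm₀⟩ := exists_ne (0 : M)
  have hlong : ∀ k : ℕ,
      ∃ l : List R, l.length = k ∧ (∀ x ∈ l, x ∈ s) ∧ l.prod • m₀ ≠ 0 := by
    intro k
    induction k with
    | zero => exact ⟨[], rfl, by simp, by simpa using hm₀⟩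
    | succ k ih =>
      obtain ⟨l, hlen, hls, hl⟩ := ih
      obtain ⟨x, hxs, hx⟩ := hmove _ hl
      refine ⟨x :: l, by simp [hlen], ?_, by simpa [mul_smul] using hx⟩
      simpa using ⟨hxs, hls⟩
  obtain ⟨l, hlen, hls, hl⟩ := hlong n
  simp [hnil l hlen hls] at hl

theorem AddSubgroup.finite_range_smul_of_finiteIndex {R M : Type*} [Ring R] [AddCommGroup M]
    [Module R M] (A : AddSubgroup R) [A.FiniteIndex] (m : M) (hA : ∀ x ∈ A, x • m = 0) :
    (Set.range fun r : R => r • m).Finite := by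
  let φ : R ⧸ A →+ M :=
    QuotientAddGroup.lift A (LinearMap.toSpanSingleton R M m).toAddMonoidHom hA
  refine (Set.finite_range φ).subset ?_
  rintro _ ⟨r, rfl⟩
  exact ⟨r, rfl⟩

theorem Subsemiring.span_range_apply_mem {F V : Type*} [Semiring F] [AddCommMonoid V]
    [Module F V] (R : Subsemiring (Module.End F V)) (w : V) {f : Module.End F V} (hf : f ∈ R)
    {x : V} (hx : x ∈ Submodule.span F (Set.range fun r : R => (r : Module.End F V) w)) :
    f x ∈ Submodule.span F (Set.range fun r : R => (r : Module.End F V) w) := by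
  refine Submodule.mem_comap.mp ((Submodule.span_le (p := Submodule.comap f _)).mpr ?_ hx)
  rintro _ ⟨r, rfl⟩
  exact Submodule.subset_span ⟨⟨f * r, R.mul_mem hf r.2⟩, rfl⟩

theorem exists_finiteDimensional_invariant_subspace_of_nilpotentByFinite_general
    (F : Type*) [Field F]
    (V : Type*) [AddCommGroup V] [Module F V] [Nontrivial V]
    (H : Subgroup (Module.End F V)ˣ)
    (hnbf : ∃ I : TwoSidedIdeal
        (↥(Subring.closure (Units.val '' (H : Set (Module.End F V)ˣ)))),
      I.addSubgroup.FiniteIndex ∧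
      ∃ n : ℕ, 1 ≤ n ∧
        ∀ l : List (↥(Subring.closure (Units.val '' (H : Set (Module.End F V)ˣ)))),
          l.length = n → (∀ x ∈ l, x ∈ I) → l.prod = 0) :
    ∃ W : Submodule F V, W ≠ ⊥ ∧ FiniteDimensional F (↥W) ∧
      ∀ u ∈ H, ∀ w ∈ W, u.val w ∈ W := by
  set R := Subring.closure (Units.val '' (H : Set (Module.End F V)ˣ))
  obtain ⟨I, hfin, n, -, hnil⟩ := hnbf
  obtain ⟨w, hw, hIw⟩ :=
    exists_ne_zero_forall_smul_eq_zero_of_prod_eq_zero (M := V) (I : Set R) n hnil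
  have hfinite : (Set.range fun r : R => r • w).Finite :=
    I.addSubgroup.finite_range_smul_of_finiteIndex w hIw
  refine ⟨Submodule.span F (Set.range fun r : R => (r : Module.End F V) w), ?_,
    FiniteDimensional.span_of_finite F hfinite, fun u hu x hx =>
      R.toSubsemiring.span_range_apply_mem w (Subring.subset_closure ⟨u, hu, rfl⟩) hx⟩
  rw [Ne, Submodule.span_eq_bot]
  push Not
  exact ⟨w, ⟨1, rfl⟩, hw⟩

/-- Let `F` be a finite field, `V` a nonzero `F`-vector space, `H` a commutative
subgroup of the group of `F`-linear automorphisms of `V`, and `v ∈ V` with `V` spanned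
by the orbit of `v` under `H`.  If the subring `R` of `End_F(V)` generated by `H` has
a nilpotent two-sided ideal of finite index, then `V` contains a nonzero
finite-dimensional `H`-invariant subspace. -/
theorem exists_finiteDimensional_invariant_subspace_of_nilpotentByFinite
    (F : Type*) [Field F] [Finite F]
    (V : Type*) [AddCommGroup V] [Module F V] [Nontrivial V]
    (H : Subgroup (Module.End F V)ˣ)
    (hcomm : ∀ a ∈ H, ∀ b ∈ H, a * b = b * a)
    (v : V)
    (hspan : Submodule.span F
        ((fun u : (Module.End F V)ˣ => u.val v) '' (H : Set (Module.End F V)ˣ)) = ⊤)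
    (hnbf : ∃ I : TwoSidedIdeal
        (↥(Subring.closure (Units.val '' (H : Set (Module.End F V)ˣ)))),
      I.addSubgroup.FiniteIndex ∧
      ∃ n : ℕ, 1 ≤ n ∧
        ∀ l : List (↥(Subring.closure (Units.val '' (H : Set (Module.End F V)ˣ)))),
          l.length = n → (∀ x ∈ l, x ∈ I) → l.prod = 0) :
    ∃ W : Submodule F V, W ≠ ⊥ ∧ FiniteDimensional F (↥W) ∧
      ∀ u ∈ H, ∀ w ∈ W, u.val w ∈ W :=
  exists_finiteDimensional_invariant_subspace_of_nilpotentByFinite_general F V H hnbf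
end
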